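/- arXiv:2507.02285 — 6 statements merged into one kernel-verified Lean document; each statement's English description precedes it below -/
import Mathlib

section
/- Let H be a real Hilbert space and T : H → Set H a maximally monotone operator. Then for every x, v ∈ H and every λ > 0, the Fitzpatrick function satisfies F_T(x,v) − ⟨x,v⟩ ≥ (1/λ) ‖x − (I + λT)⁻¹(x + λv)‖², where (I + λT)⁻¹ denotes the (single-valued, everywhere defined) resolvent of λT. -/
open RealInnerProductSpace

variable {H : Type*} [NormedAddCommGroup H] [InnerProductSpace ℝ H] [CompleteSpace H]

/-- Graph of a set-valued operator. -/
def graphH (T : H → Set H) : Set (H × H) := {p | p.2 ∈ T p.1}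

/-- Monotone operator. -/
def MonotoneOpH (T : H → Set H) : Prop :=
  ∀ ⦃p q : H × H⦄, p ∈ graphH T → q ∈ graphH T → 0 ≤ ⟪p.1 - q.1, p.2 - q.2⟫

/-- Maximally monotone operator. -/
def MaxMonotoneOpH (T : H → Set H) : Prop :=
  MonotoneOpH T ∧ ∀ p : H × H, (∀ q ∈ graphH T, 0 ≤ ⟪p.1 - q.1, p.2 - q.2⟫) → p ∈ graphH T

/-- The Fitzpatrick function, with values in `EReal`. -/
noncomputable def FitzH (T : H → Set H) (x v : H) : EReal :=
  ⨆ p ∈ graphH T, ((⟪x, p.2⟫ + ⟪p.1, v⟫ - ⟪p.1, p.2⟫ : ℝ) : EReal)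

/-! The resolvent point `w` of `x + λ v` satisfies `x - w = λ (t - v)` with `t ∈ T w`, so evaluating
the supremum defining `F_T(x, v)` at the single graph point `(w, t)` already gives
`F_T(x, v) - ⟪x, v⟫ ≥ ⟪x - w, t - v⟫ = ‖x - w‖² / λ`. -/

theorem real_inner_sub_real_inner_sub_le_fitzH {E : Type*} [NormedAddCommGroup E]
    [InnerProductSpace ℝ E] (T : E → Set E) {z u : E} (hzu : u ∈ T z) (x v : E) :
    ((⟪x, v⟫ - ⟪x - z, v - u⟫ : ℝ) : EReal) ≤ FitzH T x v := by
  have hexpand : ⟪x, v⟫ - ⟪x - z, v - u⟫ = ⟪x, u⟫ + ⟪z, v⟫ - ⟪z, u⟫ := by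
    simp only [inner_sub_left, inner_sub_right]
    ring
  rw [hexpand]
  exact le_iSup₂_of_le ((z, u) : E × E) hzu le_rfl

/-- At `lam = 0` both sides vanish, since then `x = w` and `1 / 0 = 0`. -/
theorem real_inner_sub_sub_eq_of_add_smul_eq {E : Type*} [NormedAddCommGroup E]
    [InnerProductSpace ℝ E] {x v w t : E} {lam : ℝ} (h : x + lam • v = w + lam • t) :
    ⟪x - w, v - t⟫ = -(1 / lam * ‖x - w‖ ^ 2) := by
  have hxw : x - w = lam • (t - v) := by
    rw [smul_sub, sub_eq_sub_iff_add_eq_add, h, add_comm]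
  rcases eq_or_ne lam 0 with rfl | hlam
  · simp [hxw]
  · rw [hxw, norm_smul, mul_pow, Real.norm_eq_abs, sq_abs, real_inner_smul_left,
      ← neg_sub t v, inner_neg_right, real_inner_self_eq_norm_sq]
    field_simp

theorem carlier_inequality_general (T : H → Set H)
    (x v : H) (lam : ℝ) (w : H)
    (hw : ∃ t ∈ T w, x + lam • v = w + lam • t) :
    ((⟪x, v⟫ + (1 / lam) * ‖x - w‖ ^ 2 : ℝ) : EReal) ≤ FitzH T x v := by
  obtain ⟨t, ht, hres⟩ := hw
  have hgap : ⟪x, v⟫ + 1 / lam * ‖x - w‖ ^ 2 = ⟪x, v⟫ - ⟪x - w, v - t⟫ := by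
    rw [real_inner_sub_sub_eq_of_add_smul_eq hres, sub_neg_eq_add]
  rw [hgap]
  exact real_inner_sub_real_inner_sub_le_fitzH T ht x v

/-- Carlier's inequality in a Hilbert space. -/
theorem carlier_inequality (T : H → Set H) (hT : MaxMonotoneOpH T)
    (x v : H) (lam : ℝ) (hlam : 0 < lam) (w : H)
    (hw : ∃ t ∈ T w, x + lam • v = w + lam • t) :
    ((⟪x, v⟫ + (1 / lam) * ‖x - w‖ ^ 2 : ℝ) : EReal) ≤ FitzH T x v :=
  carlier_inequality_general T x v lam w hw
end

section
/- Let X be a reflexive real Banach space, T, B : X ⇉ X* maximally monotone operators. Assume B is strongly monotone with constant c > 0 and B has a finite-valued Fitzpatrick function. Then for every (x,v) ∈ X × X* and λ > 0, F_T(x,v) − ⟨x,v⟩ ≥ (c/λ) · sup_{x' ∈ Bx} ‖x − (B + λT)⁻¹(x' + λv)‖², where (B + λT)⁻¹ is single-valued with full domain. -/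
open NormedSpace

variable {X : Type*} [NormedAddCommGroup X] [NormedSpace ℝ X]

/-- Graph of a set-valued operator into the dual. -/
def graphB (T : X → Set (StrongDual ℝ X)) : Set (X × StrongDual ℝ X) := {p | p.2 ∈ T p.1}

/-- Monotone operator from `X` to its dual. -/
def MonotoneOpB (T : X → Set (StrongDual ℝ X)) : Prop :=
  ∀ ⦃p q : X × StrongDual ℝ X⦄, p ∈ graphB T → q ∈ graphB T → 0 ≤ (p.2 - q.2) (p.1 - q.1)

/-- Maximally monotone operator from `X` to its dual. -/
def MaxMonotoneOpB (T : X → Set (StrongDual ℝ X)) : Prop :=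
  MonotoneOpB T ∧
    ∀ p : X × StrongDual ℝ X, (∀ q ∈ graphB T, 0 ≤ (p.2 - q.2) (p.1 - q.1)) → p ∈ graphB T

/-- The Fitzpatrick function, with values in `EReal`. -/
noncomputable def FitzB (T : X → Set (StrongDual ℝ X)) (x : X) (v : StrongDual ℝ X) : EReal :=
  ⨆ p ∈ graphB T, ((p.2 x + v p.1 - p.2 p.1 : ℝ) : EReal)

/-- Strong monotonicity with constant `c`. -/
def StronglyMonotoneB (B : X → Set (StrongDual ℝ X)) (c : ℝ) : Prop :=
  ∀ ⦃x y : X⦄ ⦃v u : StrongDual ℝ X⦄, v ∈ B x → u ∈ B y → c * ‖x - y‖ ^ 2 ≤ (v - u) (x - y)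

/-- The normalized duality mapping. -/
def JdualMap (x : X) : Set (StrongDual ℝ X) := {v | v x = ‖x‖ * ‖v‖ ∧ ‖v‖ = ‖x‖}

/-- The Fenchel subdifferential of a real-valued function. -/
def SubdiffB (f : X → ℝ) (x : X) : Set (StrongDual ℝ X) := {v | ∀ y, f x + v (y - x) ≤ f y}

/-- `2`-uniform convexity with constant `μ`, via the modulus of convexity. -/
def TwoUniformlyConvex (X : Type*) [NormedAddCommGroup X] [NormedSpace ℝ X] (μ : ℝ) : Prop :=
  ∀ ε ∈ Set.Icc (0 : ℝ) 2, ∀ x y : X, ‖x‖ = 1 → ‖y‖ = 1 → ε ≤ ‖x - y‖ →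
    μ * ε ^ 2 ≤ 1 - ‖(2 : ℝ)⁻¹ • (x + y)‖

/-!
The inequality is strong monotonicity of `B` tested against `T`: if `x' + λv = b + λt` with
`b ∈ Bw`, `t ∈ Tw`, then `c‖x - w‖² ≤ λ⟨x - w, t - v⟩`, while
`⟨x, t⟩ + ⟨w, v⟩ - ⟨w, t⟩ ≤ F_T(x, v)`. The same estimate makes `B + λT` injective.

Surjectivity onto `u` is a Fenchel duality argument. The function
`f(y, s) = F_B(y, u - λs) - ⟨y, u⟩` is finite, convex and lower semicontinuous, hence continuous
(Baire), and it lies above the hypograph of `-λF_T` because `F_S ≥ ⟨·, ·⟩` for maximally monotone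
`S`. Separating them yields an affine function `⟨y, P⟩ + ⟨z, s⟩ + β` in between (reflexivity puts
`z` in `X`). Then `(-z/λ, -P/λ)` is monotonically related to the graph of `T`, and
`(-z/λ, u + P)` to that of `B`, up to errors of opposite signs; maximality forces both errors
to vanish and both pairs into the graphs.
-/

open Set Filter Topology

section ConvexAnalysis

variable {E : Type*} [NormedAddCommGroup E] [NormedSpace ℝ E]

theorem ConvexOn.continuous_of_lowerSemicontinuous [CompleteSpace E] {f : E → ℝ}
    (hf : ConvexOn ℝ univ f) (hlsc : LowerSemicontinuous f) : Continuous f := by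
  have hclosed (n : ℕ) : IsClosed (f ⁻¹' Iic (n : ℝ)) := hlsc.isClosed_preimage n
  have hcover : ⋃ n : ℕ, f ⁻¹' Iic (n : ℝ) = univ :=
    eq_univ_of_forall fun x => mem_iUnion.2 ⟨⌈f x⌉₊, Nat.le_ceil (f x)⟩
  obtain ⟨n, x₀, hx₀⟩ := nonempty_interior_of_iUnion_of_closed hclosed hcover
  have hbdd : ∃ x₀ ∈ univ, (𝓝 x₀).IsBoundedUnder (· ≤ ·) f :=
    ⟨x₀, mem_univ x₀, isBoundedUnder_of_eventually_le (a := (n : ℝ))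
      (mem_of_superset (isOpen_interior.mem_nhds hx₀) interior_subset)⟩
  rw [← continuousOn_univ]
  exact ((hf.continuousOn_tfae isOpen_univ univ_nonempty).out 3 1).mp hbdd

theorem convexOn_ciSup {ι : Type*} [Nonempty ι] {s : Set E} {g : ι → E → ℝ}
    (hg : ∀ i, ConvexOn ℝ s (g i)) (hbdd : ∀ x ∈ s, BddAbove (range fun i => g i x)) :
    ConvexOn ℝ s fun x => ⨆ i, g i x := by
  refine ⟨(hg (Classical.arbitrary ι)).1, fun x hx y hy a b ha hb hab => ciSup_le fun i => ?_⟩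
  show g i (a • x + b • y) ≤ a * (⨆ i, g i x) + b * ⨆ i, g i y
  calc g i (a • x + b • y) ≤ a * g i x + b * g i y := (hg i).2 hx hy ha hb hab
    _ ≤ a * (⨆ i, g i x) + b * ⨆ i, g i y := by
      gcongr
      exacts [le_ciSup (hbdd x hx) i, le_ciSup (hbdd y hy) i]

theorem continuous_ciSup_of_convexOn [CompleteSpace E] {ι : Type*} [Nonempty ι] {g : ι → E → ℝ}
    (hg : ∀ i, ConvexOn ℝ univ (g i)) (hgc : ∀ i, Continuous (g i))
    (hbdd : ∀ x, BddAbove (range fun i => g i x)) : Continuous fun x => ⨆ i, g i x :=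
  (convexOn_ciSup hg fun x _ => hbdd x).continuous_of_lowerSemicontinuous
    (lowerSemicontinuous_ciSup hbdd fun i => (hgc i).lowerSemicontinuous)

theorem ConvexOn.exists_affine_between {f : E → ℝ} (hf : ConvexOn ℝ univ f) (hfc : Continuous f)
    {C : Set (E × ℝ)} (hC : Convex ℝ C) (hCne : C.Nonempty) (hCf : ∀ a ∈ C, a.2 ≤ f a.1) :
    ∃ (ℓ : StrongDual ℝ E) (β : ℝ), (∀ x, ℓ x + β ≤ f x) ∧ ∀ a ∈ C, a.2 ≤ ℓ a.1 + β := by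
  have hU : IsOpen {a : E × ℝ | a.1 ∈ univ ∧ f a.1 < a.2} := by
    simpa using isOpen_lt (hfc.comp continuous_fst) continuous_snd
  have hdisj : Disjoint {a : E × ℝ | a.1 ∈ univ ∧ f a.1 < a.2} C :=
    disjoint_left.2 fun a ha haC => (hCf a haC).not_gt ha.2
  obtain ⟨L, α, hLU, hLC⟩ := geometric_hahn_banach_open hf.convex_strict_epigraph hU hC hdisj
  set ℓ₀ := L.comp (ContinuousLinearMap.inl ℝ E ℝ)
  set γ := -L (0, 1)
  have hL (x : E) (r : ℝ) : L (x, r) = ℓ₀ x - r * γ := by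
    have : (x, r) = (x, (0 : ℝ)) + r • ((0 : E), (1 : ℝ)) := by simp
    rw [this, map_add, map_smul]
    simp [ℓ₀, γ]
  have hγ : 0 < γ := by
    obtain ⟨a, ha⟩ := hCne
    have h₁ := hLU (a.1, f a.1 + 1) (by simp)
    have h₂ := hLC a ha
    rw [hL] at h₁
    rw [← Prod.mk.eta (p := a), hL] at h₂
    nlinarith [hCf a ha]
  have hcomb (x : E) : (γ⁻¹ • ℓ₀) x + -(γ⁻¹ * α) = (ℓ₀ x - α) / γ := by
    simp only [FunLike.coe_smul, Pi.smul_apply, smul_eq_mul]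
    ring
  refine ⟨γ⁻¹ • ℓ₀, -(γ⁻¹ * α), fun x => ?_, fun a ha => ?_⟩
  · have hx : ℓ₀ x - f x * γ ≤ α := by
      refine le_of_forall_pos_lt_add fun ε hε => ?_
      have := hLU (x, f x + ε / γ) (by simp [hε, hγ])
      rw [hL, add_mul, div_mul_cancel₀ _ hγ.ne'] at this
      linarith
    rw [hcomb, div_le_iff₀ hγ]
    linarith
  · have ha' := hLC a ha
    rw [← Prod.mk.eta (p := a), hL] at ha'
    rw [hcomb, le_div_iff₀ hγ]
    linarith

end ConvexAnalysis

section MonotoneOperators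

variable {S : X → Set (StrongDual ℝ X)}

theorem MaxMonotoneOpB.exists_mem_graphB_nonneg (hS : MaxMonotoneOpB S) (x : X)
    (v : StrongDual ℝ X) : ∃ p ∈ graphB S, 0 ≤ (p.2 - v) (x - p.1) := by
  by_contra! h
  have hx : (x, v) ∈ graphB S := hS.2 (x, v) fun q hq => by
    rw [← neg_sub q.2 v, neg_apply]
    linarith [h q hq]
  simpa using h (x, v) hx

theorem MaxMonotoneOpB.nonempty_graphB (hS : MaxMonotoneOpB S) : (graphB S).Nonempty :=
  let ⟨p, hp, _⟩ := hS.exists_mem_graphB_nonneg 0 0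
  ⟨p, hp⟩

theorem MaxMonotoneOpB.nonpos_of_forall_le (hS : MaxMonotoneOpB S) {x : X} {v : StrongDual ℝ X}
    {δ : ℝ} (h : ∀ p ∈ graphB S, δ ≤ (v - p.2) (x - p.1)) : δ ≤ 0 := by
  obtain ⟨p, hp, hnonneg⟩ := hS.exists_mem_graphB_nonneg x v
  have := h p hp
  rw [← neg_sub p.2 v, neg_apply] at this
  linarith

theorem coe_le_fitzB {p : X × StrongDual ℝ X} (hp : p ∈ graphB S) (x : X) (v : StrongDual ℝ X) :
    ((p.2 x + v p.1 - p.2 p.1 : ℝ) : EReal) ≤ FitzB S x v :=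
  le_iSup₂ (f := fun p (_ : p ∈ graphB S) => ((p.2 x + v p.1 - p.2 p.1 : ℝ) : EReal)) p hp

theorem le_toReal_fitzB {p : X × StrongDual ℝ X} (hp : p ∈ graphB S) {x : X}
    {v : StrongDual ℝ X} (hfin : FitzB S x v < ⊤) :
    p.2 x + v p.1 - p.2 p.1 ≤ (FitzB S x v).toReal := by
  exact_mod_cast (coe_le_fitzB hp x v).trans (EReal.le_coe_toReal hfin.ne)

theorem StronglyMonotoneB.mul_sq_norm_le {c lam : ℝ} (hS : StronglyMonotoneB S c) {x w : X}
    {x' b v t : StrongDual ℝ X} (hx' : x' ∈ S x) (hb : b ∈ S w) (h : x' + lam • v = b + lam • t) :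
    c * ‖x - w‖ ^ 2 ≤ lam * (t - v) (x - w) := by
  have hdiff : x' - b = lam • (t - v) := by
    rw [smul_sub, sub_eq_sub_iff_add_eq_add, h, add_comm]
  simpa [hdiff] using hS hx' hb

end MonotoneOperators

theorem exists_apply_prod_eq_of_surjective
    (hrefl : Function.Surjective (inclusionInDoubleDual ℝ X))
    (ℓ : StrongDual ℝ (X × StrongDual ℝ X)) :
    ∃ (P : StrongDual ℝ X) (z : X), ∀ y s, ℓ (y, s) = P y + s z := by
  obtain ⟨z, hz⟩ := hrefl (ℓ.comp (ContinuousLinearMap.inr ℝ X (StrongDual ℝ X)))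
  refine ⟨ℓ.comp (ContinuousLinearMap.inl ℝ X (StrongDual ℝ X)), z, fun y s => ?_⟩
  have hs : s z = ℓ (0, s) := by
    rw [← dual_def ℝ X z s, hz]
    rfl
  rw [hs, ContinuousLinearMap.comp_apply, ContinuousLinearMap.inl_apply, ← map_add]
  simp

section ShiftedFitz

variable {B T : X → Set (StrongDual ℝ X)} {u : StrongDual ℝ X} {lam : ℝ}

/-- `F_B(y, u - λ s) - ⟨y, u⟩` at `q = (y, s)`, for the Fitzpatrick function `F_B`. -/
noncomputable def shiftedFitz (B : X → Set (StrongDual ℝ X)) (u : StrongDual ℝ X) (lam : ℝ)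
    (q : X × StrongDual ℝ X) : ℝ :=
  ⨆ p : graphB B, (p.1.2 - u) (q.1 - p.1.1) - lam * q.2 p.1.1

theorem bddAbove_shiftedFitz_terms (hfin : ∀ x v, FitzB B x v < ⊤) (q : X × StrongDual ℝ X) :
    BddAbove (range fun p : graphB B => (p.1.2 - u) (q.1 - p.1.1) - lam * q.2 p.1.1) := by
  refine ⟨(FitzB B q.1 (u - lam • q.2)).toReal - u q.1, ?_⟩
  rintro _ ⟨p, rfl⟩
  have := le_toReal_fitzB p.2 (hfin q.1 (u - lam • q.2))
  simp only [sub_apply, smul_apply, map_sub, smul_eq_mul] at this ⊢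
  linarith

theorem convexOn_shiftedFitz_term (p : X × StrongDual ℝ X) :
    ConvexOn ℝ univ fun q : X × StrongDual ℝ X => (p.2 - u) (q.1 - p.1) - lam * q.2 p.1 := by
  refine ⟨convex_univ, fun q _ q' _ a b _ _ hab => le_of_eq ?_⟩
  simp only [Prod.fst_add, Prod.snd_add, Prod.smul_fst, Prod.smul_snd, map_sub, map_add,
    map_smul, add_apply, smul_apply, smul_eq_mul]
  linear_combination ((p.2 - u) p.1) * hab

theorem continuous_shiftedFitz_term (p : X × StrongDual ℝ X) :
    Continuous fun q : X × StrongDual ℝ X => (p.2 - u) (q.1 - p.1) - lam * q.2 p.1 := by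
  fun_prop

theorem convexOn_shiftedFitz (hB : MaxMonotoneOpB B) (hfin : ∀ x v, FitzB B x v < ⊤) :
    ConvexOn ℝ univ (shiftedFitz B u lam) :=
  have := hB.nonempty_graphB.to_subtype
  convexOn_ciSup (fun p => convexOn_shiftedFitz_term p.1) fun q _ =>
    bddAbove_shiftedFitz_terms hfin q

theorem continuous_shiftedFitz [CompleteSpace X] (hB : MaxMonotoneOpB B)
    (hfin : ∀ x v, FitzB B x v < ⊤) : Continuous (shiftedFitz B u lam) :=
  have := hB.nonempty_graphB.to_subtype
  continuous_ciSup_of_convexOn (fun p => convexOn_shiftedFitz_term p.1)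
    (fun p => continuous_shiftedFitz_term p.1) (bddAbove_shiftedFitz_terms hfin)

theorem neg_mul_apply_le_shiftedFitz (hB : MaxMonotoneOpB B) (hfin : ∀ x v, FitzB B x v < ⊤)
    (q : X × StrongDual ℝ X) : -(lam * q.2 q.1) ≤ shiftedFitz B u lam q := by
  obtain ⟨p, hp, hnonneg⟩ := hB.exists_mem_graphB_nonneg q.1 (u - lam • q.2)
  refine le_trans ?_ (le_ciSup (bddAbove_shiftedFitz_terms hfin q) ⟨p, hp⟩)
  simp only [sub_apply, smul_apply, map_sub, smul_eq_mul] at hnonneg ⊢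
  linarith

theorem shiftedFitz_le (hB : MonotoneOpB B) (hlam : lam ≠ 0) {p : X × StrongDual ℝ X}
    (hp : p ∈ graphB B) : shiftedFitz B u lam (p.1, lam⁻¹ • (u - p.2)) ≤ (p.2 - u) p.1 := by
  have := Set.nonempty_of_mem hp |>.to_subtype
  refine ciSup_le fun p' => ?_
  have := hB p'.2 hp
  simp only [sub_apply, smul_apply, map_sub, smul_eq_mul] at this ⊢
  field_simp
  linarith

/-- The hypograph of `-λ F_T`, for the Fitzpatrick function `F_T`. -/
def hypographNegFitz (T : X → Set (StrongDual ℝ X)) (lam : ℝ) :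
    Set ((X × StrongDual ℝ X) × ℝ) :=
  {a | ∀ p ∈ graphB T, a.2 ≤ -(lam * (p.2 a.1.1 + a.1.2 p.1 - p.2 p.1))}

theorem convex_hypographNegFitz : Convex ℝ (hypographNegFitz T lam) := by
  intro a ha a' ha' θ μ hθ hμ hθμ p hp
  have h := ha p hp
  have h' := ha' p hp
  simp only [Prod.fst_add, Prod.snd_add, Prod.smul_fst, Prod.smul_snd, map_add, map_smul,
    add_apply, smul_apply, smul_eq_mul]
  have hμ' : μ = 1 - θ := by linarith
  subst hμ'
  nlinarith

theorem mem_hypographNegFitz (hT : MonotoneOpB T) (hlam : 0 ≤ lam) {p : X × StrongDual ℝ X}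
    (hp : p ∈ graphB T) : (p, -(lam * p.2 p.1)) ∈ hypographNegFitz T lam := by
  intro p' hp'
  have := hT hp hp'
  simp only [sub_apply, map_sub] at this ⊢
  nlinarith

theorem le_neg_mul_apply_of_mem_hypographNegFitz (hT : MaxMonotoneOpB T) (hlam : 0 ≤ lam)
    {a : (X × StrongDual ℝ X) × ℝ} (ha : a ∈ hypographNegFitz T lam) :
    a.2 ≤ -(lam * a.1.2 a.1.1) := by
  obtain ⟨p, hp, hnonneg⟩ := hT.exists_mem_graphB_nonneg a.1.1 a.1.2
  have := ha p hp
  simp only [sub_apply, map_sub] at hnonneg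
  nlinarith

end ShiftedFitz

section Resolvent

variable {B T : X → Set (StrongDual ℝ X)} {lam : ℝ}

theorem exists_approx_monotonically_related [CompleteSpace X]
    (hrefl : Function.Surjective (inclusionInDoubleDual ℝ X)) (hT : MaxMonotoneOpB T)
    (hB : MaxMonotoneOpB B) (hfin : ∀ x v, FitzB B x v < ⊤) (hlam : 0 < lam)
    (u : StrongDual ℝ X) :
    ∃ (x : X) (t : StrongDual ℝ X) (δ : ℝ), (∀ p ∈ graphB T, δ ≤ (t - p.2) (x - p.1)) ∧
      ∀ p ∈ graphB B, -(lam * δ) ≤ (u - lam • t - p.2) (x - p.1) := by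
  obtain ⟨p₀, hp₀⟩ := hT.nonempty_graphB
  obtain ⟨ℓ, β, hℓf, hℓC⟩ :=
    (convexOn_shiftedFitz (u := u) (lam := lam) hB hfin).exists_affine_between
    (continuous_shiftedFitz hB hfin) convex_hypographNegFitz
    ⟨_, mem_hypographNegFitz hT.1 hlam.le hp₀⟩
    fun a ha => (le_neg_mul_apply_of_mem_hypographNegFitz hT hlam.le ha).trans
      (neg_mul_apply_le_shiftedFitz hB hfin a.1)
  obtain ⟨P, z, hPz⟩ := exists_apply_prod_eq_of_surjective hrefl ℓ
  refine ⟨-lam⁻¹ • z, -lam⁻¹ • P, (lam⁻¹ * P z - β) / lam, fun p hp => ?_, fun p hp => ?_⟩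
  · have h := hℓC _ (mem_hypographNegFitz hT.1 hlam.le hp)
    simp only [hPz] at h
    simp only [sub_apply, smul_apply, map_sub, map_smul, smul_eq_mul]
    field_simp
    linarith [mul_le_mul_of_nonneg_left h hlam.le]
  · have h := (hℓf _).trans (shiftedFitz_le hB.1 hlam.ne' hp)
    simp only [hPz, sub_apply, smul_apply, map_sub, map_smul, smul_eq_mul] at h ⊢
    field_simp at h ⊢
    linarith

theorem exists_eq_add_smul [CompleteSpace X]
    (hrefl : Function.Surjective (inclusionInDoubleDual ℝ X)) (hT : MaxMonotoneOpB T)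
    (hB : MaxMonotoneOpB B) (hfin : ∀ x v, FitzB B x v < ⊤) (hlam : 0 < lam)
    (u : StrongDual ℝ X) : ∃ w : X, ∃ b ∈ B w, ∃ t ∈ T w, u = b + lam • t := by
  obtain ⟨x, t, δ, hTδ, hBδ⟩ := exists_approx_monotonically_related hrefl hT hB hfin hlam u
  have hδ : δ = 0 := by
    nlinarith [hT.nonpos_of_forall_le hTδ, hB.nonpos_of_forall_le hBδ]
  subst hδ
  exact ⟨x, u - lam • t, hB.2 (x, u - lam • t) fun p hp => by simpa using hBδ p hp, t,
    hT.2 (x, t) hTδ, by abel⟩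

theorem eq_of_add_smul_eq {c : ℝ} (hBs : StronglyMonotoneB B c) (hc : 0 < c) (hT : MonotoneOpB T)
    (hlam : 0 ≤ lam) {w y : X} {b t b' t' : StrongDual ℝ X} (hb : b ∈ B w) (ht : t ∈ T w)
    (hb' : b' ∈ B y) (ht' : t' ∈ T y) (h : b + lam • t = b' + lam • t') : y = w := by
  have hstrong := hBs.mul_sq_norm_le hb' hb h.symm
  have hmono : 0 ≤ (t' - t) (y - w) := hT (p := (y, t')) (q := (w, t)) ht' ht
  rw [← neg_sub t' t, neg_apply] at hstrong
  have : ‖y - w‖ ^ 2 ≤ 0 := by nlinarith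
  simpa [sub_eq_zero] using this

end Resolvent

/-- Carlier's inequality in a reflexive Banach space. -/
theorem carlier_inequality_banach [CompleteSpace X]
    (hrefl : Function.Surjective (inclusionInDoubleDual ℝ X))
    (T B : X → Set (StrongDual ℝ X)) (hT : MaxMonotoneOpB T) (hB : MaxMonotoneOpB B)
    (c : ℝ) (hc : 0 < c) (hBs : StronglyMonotoneB B c)
    (hfin : ∀ (x : X) (v : StrongDual ℝ X), FitzB B x v < ⊤)
    (x : X) (v : StrongDual ℝ X) (lam : ℝ) (hlam : 0 < lam) :
    (∀ u : StrongDual ℝ X, ∃! w : X, ∃ b ∈ B w, ∃ t ∈ T w, u = b + lam • t) ∧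
      ∀ x' ∈ B x, ∀ w : X, (∃ b ∈ B w, ∃ t ∈ T w, x' + lam • v = b + lam • t) →
        ((v x + (c / lam) * ‖x - w‖ ^ 2 : ℝ) : EReal) ≤ FitzB T x v := by
  refine ⟨fun u => ?_, fun x' hx' w ⟨b, hb, t, ht, h⟩ => ?_⟩
  · obtain ⟨w, b, hb, t, ht, rfl⟩ := exists_eq_add_smul hrefl hT hB hfin hlam u
    exact ⟨w, ⟨b, hb, t, ht, rfl⟩, fun y ⟨b', hb', t', ht', h⟩ =>
      eq_of_add_smul_eq hBs hc hT.1 hlam.le hb ht hb' ht' h⟩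
  · have hstrong := hBs.mul_sq_norm_le hx' hb h
    have hdiv : c / lam * ‖x - w‖ ^ 2 ≤ (t - v) (x - w) := by
      rw [div_mul_eq_mul_div, div_le_iff₀ hlam]
      linarith
    have hreal : v x + c / lam * ‖x - w‖ ^ 2 ≤ t x + v w - t w := by
      simp only [sub_apply, map_sub] at hdiv
      linarith
    exact (EReal.coe_le_coe_iff.2 hreal).trans (coe_le_fitzB (p := (w, t)) ht x v)
end

section
/- Let H be a real Hilbert space and T : H ⇉ H maximally monotone. Then for every (x,v) ∈ H × H: F_T(x,v) − ⟨x,v⟩ ≥ (1/2) inf_{(w,z) ∈ G(T)} (‖x − w‖² + ‖v − z‖²). -/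
open RealInnerProductSpace

variable {H : Type*} [NormedAddCommGroup H] [InnerProductSpace ℝ H] [CompleteSpace H]

/-!
Minty's theorem does the work: if `(z, w) ∈ G(T)` and `z + w = x + v`, then `v - w = -(x - z)`,
so the term of `F_T(x, v)` at `(z, w)` is
`⟨x, v⟩ - ⟨x - z, v - w⟩ = ⟨x, v⟩ + (‖x - z‖² + ‖v - w‖²) / 2`.

Minty's theorem is proved variationally. On the L²-product, `h = F_T + ‖·‖² / 2` is a supremum
of `‖·‖² / 2` plus affine functions, hence 1-strongly convex, so on a complete space it has a
minimiser `p₀` with `h ≥ min h + ‖· - p₀‖² / 2`. Monotonicity gives `h(z, w) ≤ ‖z + w‖² / 2` on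
the graph, and maximality gives `h(x, v) ≥ ‖x + v‖² / 2` everywhere. Comparing the two at graph
points through the growth bound shows that `(-p₀.2, -p₀.1)` is monotonically related to the
whole graph, hence lies in it, and that its coordinates sum to zero. Minty's theorem for
`z + w = u` follows by translating `T` by `u`.
-/

open Filter Topology Set

section StrongConvexFamily

-- `⨆ i, f i` may take the value `+∞`, so it is handled through its upper bounds
-- `∀ i, f i p ≤ c`.
variable {E ι : Type*} [NormedAddCommGroup E] [InnerProductSpace ℝ E] {f : ι → E → ℝ} {μ m : ℝ}

lemma forall_le_smul_add_smul_of_strongConvexOn (hf : ∀ i, StrongConvexOn univ μ (f i))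
    {p p' : E} {c c' a b : ℝ} (hp : ∀ i, f i p ≤ c) (hp' : ∀ i, f i p' ≤ c') (ha : 0 ≤ a)
    (hb : 0 ≤ b) (hab : a + b = 1) (i : ι) :
    f i (a • p + b • p') ≤ a * c + b * c' - a * b * (μ / 2 * ‖p - p'‖ ^ 2) := by
  have h := (hf i).2 (mem_univ p) (mem_univ p') ha hb hab
  simp only [smul_eq_mul] at h
  nlinarith [mul_le_mul_of_nonneg_left (hp i) ha, mul_le_mul_of_nonneg_left (hp' i) hb]

lemma mul_sq_norm_sub_le_of_strongConvexOn (hf : ∀ i, StrongConvexOn univ μ (f i))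
    (hm : m ∈ lowerBounds {c | ∃ p, ∀ i, f i p ≤ c}) {p p' : E} {c c' : ℝ}
    (hp : ∀ i, f i p ≤ c) (hp' : ∀ i, f i p' ≤ c') :
    μ * ‖p - p'‖ ^ 2 ≤ 4 * (c + c' - 2 * m) := by
  have := hm ⟨_, forall_le_smul_add_smul_of_strongConvexOn hf hp hp' (by norm_num)
    (by norm_num) (add_halves 1)⟩
  linarith

lemma exists_forall_le_of_isGLB_of_strongConvexOn [CompleteSpace E] (hμ : 0 < μ)
    (hf : ∀ i, StrongConvexOn univ μ (f i)) (hcont : ∀ i, Continuous (f i))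
    (hm : IsGLB {c | ∃ p, ∀ i, f i p ≤ c} m) : ∃ p₀, ∀ i, f i p₀ ≤ m := by
  have hε : Tendsto (fun n : ℕ => 1 / ((n : ℝ) + 1)) atTop (𝓝 0) :=
    tendsto_one_div_add_atTop_nhds_zero_nat
  choose c hc hmc hcm using fun n : ℕ =>
    hm.exists_between (lt_add_of_pos_right m (Nat.one_div_pos_of_nat (n := n)))
  choose u hu using hc
  have hc_lim : Tendsto c atTop (𝓝 m) := by
    refine tendsto_of_tendsto_of_tendsto_of_le_of_le tendsto_const_nhds ?_ hmc
      fun n => (hcm n).le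
    simpa using hε.const_add m
  have hu_cauchy : CauchySeq u := by
    refine cauchySeq_of_le_tendsto_0 (fun N => √(8 * (1 / ((N : ℝ) + 1)) / μ))
      (fun n k N hn hk => ?_) ?_
    · rw [dist_eq_norm, Real.le_sqrt (norm_nonneg _) (by positivity), le_div_iff₀' hμ]
      have := mul_sq_norm_sub_le_of_strongConvexOn hf hm.1 (hu n) (hu k)
      have := Nat.one_div_le_one_div (α := ℝ) hn
      have := Nat.one_div_le_one_div (α := ℝ) hk
      linarith [hcm n, hcm k]
    · simpa using ((hε.const_mul 8).div_const μ).sqrt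
  obtain ⟨p₀, hp₀⟩ := cauchySeq_tendsto_of_complete hu_cauchy
  exact ⟨p₀, fun i => le_of_tendsto_of_tendsto' ((hcont i).tendsto p₀ |>.comp hp₀) hc_lim
    fun n => hu n i⟩

lemma add_sq_norm_sub_le_of_strongConvexOn (hf : ∀ i, StrongConvexOn univ μ (f i))
    (hm : m ∈ lowerBounds {c | ∃ p, ∀ i, f i p ≤ c}) {p₀ : E} (hp₀ : ∀ i, f i p₀ ≤ m)
    {p : E} {c : ℝ} (hp : ∀ i, f i p ≤ c) : m + μ / 2 * ‖p - p₀‖ ^ 2 ≤ c := by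
  have hgap : ∀ t ∈ Ioc (0 : ℝ) 1, (1 - t) * (μ / 2 * ‖p₀ - p‖ ^ 2) ≤ c - m := by
    rintro t ⟨ht0, ht1⟩
    have := hm ⟨_, forall_le_smul_add_smul_of_strongConvexOn hf hp₀ hp (sub_nonneg.2 ht1) ht0.le
      (sub_add_cancel 1 t)⟩
    have : t * ((1 - t) * (μ / 2 * ‖p₀ - p‖ ^ 2)) ≤ t * (c - m) := by linarith
    exact le_of_mul_le_mul_left this ht0
  have hlim : Tendsto (fun t : ℝ => (1 - t) * (μ / 2 * ‖p₀ - p‖ ^ 2)) (𝓝[>] 0)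
      (𝓝 (μ / 2 * ‖p₀ - p‖ ^ 2)) :=
    tendsto_nhdsWithin_of_tendsto_nhds (Continuous.tendsto' (by fun_prop) _ _ (by simp))
  have := le_of_tendsto hlim (eventually_of_mem (Ioc_mem_nhdsGT one_pos) hgap)
  rw [norm_sub_rev] at this
  linarith

theorem exists_quadratic_growth_of_strongConvexOn [CompleteSpace E] (hμ : 0 < μ)
    (hf : ∀ i, StrongConvexOn univ μ (f i)) (hcont : ∀ i, Continuous (f i))
    (hne : ∃ p c, ∀ i, f i p ≤ c) (hbdd : ∃ b, ∀ p c, (∀ i, f i p ≤ c) → b ≤ c) :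
    ∃ p₀ m, (∀ i, f i p₀ ≤ m) ∧ ∀ p c, (∀ i, f i p ≤ c) → m + μ / 2 * ‖p - p₀‖ ^ 2 ≤ c := by
  obtain ⟨p, c, hpc⟩ := hne
  obtain ⟨b, hb⟩ := hbdd
  have hglb := isGLB_csInf (s := {c | ∃ p, ∀ i, f i p ≤ c}) ⟨c, p, hpc⟩
    ⟨b, by rintro c ⟨p, hp⟩; exact hb p c hp⟩
  obtain ⟨p₀, hp₀⟩ := exists_forall_le_of_isGLB_of_strongConvexOn hμ hf hcont hglb
  exact ⟨p₀, _, hp₀, fun p c hp => add_sq_norm_sub_le_of_strongConvexOn hf hglb.1 hp₀ hp⟩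

end StrongConvexFamily

section MaximalMonotone

variable {E : Type*} [NormedAddCommGroup E] [InnerProductSpace ℝ E] {T : E → Set E}

/-- `⨆ q ∈ graphH T, fitzTerm q p = FitzH T p.fst p.snd + ‖p‖ ^ 2 / 2`. -/
noncomputable def fitzTerm (q : E × E) (p : WithLp 2 (E × E)) : ℝ :=
  ‖p.fst + p.snd‖ ^ 2 / 2 - ⟪p.fst - q.1, p.snd - q.2⟫

lemma strongConvexOn_fitzTerm (q : E × E) : StrongConvexOn univ 1 (fitzTerm q) := by
  rw [strongConvexOn_iff_convex]
  have h : (fun p => fitzTerm q p - 1 / 2 * ‖p‖ ^ 2) =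
      (fun p => ⟪WithLp.toLp 2 (q.2, q.1), p⟫) + fun _ => -⟪q.1, q.2⟫ := by
    ext p
    simp only [fitzTerm, WithLp.prod_norm_sq_eq_of_L2, WithLp.prod_inner_apply, Pi.add_apply,
      norm_add_sq_real, inner_sub_left, inner_sub_right, WithLp.ofLp_fst, WithLp.ofLp_snd]
    rw [real_inner_comm q.2]
    ring
  rw [h]
  exact ((innerSL ℝ (WithLp.toLp 2 (q.2, q.1))).toLinearMap.convexOn convex_univ).add_const _

lemma continuous_fitzTerm (q : E × E) : Continuous (fitzTerm q) := by
  unfold fitzTerm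
  fun_prop

lemma MonotoneOpH.fitzTerm_toLp_le (hT : MonotoneOpH T) {p q : E × E} (hp : p ∈ graphH T)
    (hq : q ∈ graphH T) : fitzTerm q (WithLp.toLp 2 p) ≤ ‖p.1 + p.2‖ ^ 2 / 2 := by
  simpa [fitzTerm] using hT hp hq

lemma MaxMonotoneOpH.sq_norm_add_div_two_le (hT : MaxMonotoneOpH T)
    {p : WithLp 2 (E × E)} {c : ℝ} (hp : ∀ q ∈ graphH T, fitzTerm q p ≤ c) :
    ‖p.fst + p.snd‖ ^ 2 / 2 ≤ c := by
  by_cases h : ∀ q ∈ graphH T, 0 ≤ ⟪p.fst - q.1, p.snd - q.2⟫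
  · simpa [fitzTerm] using hp _ (hT.2 (p.fst, p.snd) h)
  · push Not at h
    obtain ⟨q, hq, hneg⟩ := h
    have := hp q hq
    rw [fitzTerm] at this
    linarith

lemma MaxMonotoneOpH.graphH_nonempty (hT : MaxMonotoneOpH T) : (graphH T).Nonempty := by
  by_contra h
  rw [not_nonempty_iff_eq_empty] at h
  simpa [h] using hT.2 0

lemma MaxMonotoneOpH.exists_add_eq_zero [CompleteSpace E] (hT : MaxMonotoneOpH T) :
    ∃ p ∈ graphH T, p.1 + p.2 = 0 := by
  obtain ⟨q₀, hq₀⟩ := hT.graphH_nonempty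
  have hbdd : ∀ p c, (∀ q : graphH T, fitzTerm q.1 p ≤ c) → 0 ≤ c := fun p c hp =>
    (by positivity : (0 : ℝ) ≤ _).trans (hT.sq_norm_add_div_two_le fun q hq => hp ⟨q, hq⟩)
  obtain ⟨p₀, m, hp₀, hgrowth⟩ := exists_quadratic_growth_of_strongConvexOn
    (f := fun q : graphH T => fitzTerm q.1) one_pos (fun q => strongConvexOn_fitzTerm q.1)
    (fun q => continuous_fitzTerm q.1) ⟨_, _, fun q => hT.1.fitzTerm_toLp_le hq₀ q.2⟩
    ⟨0, hbdd⟩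
  obtain ⟨x, v⟩ := p₀
  have hkey : ∀ q ∈ graphH T, ‖x + v‖ ^ 2 ≤ ⟪q.1 + v, q.2 + x⟫ := by
    intro q hq
    have hq_growth := hgrowth _ _ fun r => hT.1.fitzTerm_toLp_le hq r.2
    have hp₀_min := hT.sq_norm_add_div_two_le fun r hr => hp₀ ⟨r, hr⟩
    have hid : ‖q.1 + q.2‖ ^ 2 =
        ‖q.1 - x‖ ^ 2 + ‖q.2 - v‖ ^ 2 + 2 * ⟪q.1 + v, q.2 + x⟫ - ‖x + v‖ ^ 2 := by
      simp only [norm_add_sq_real, norm_sub_sq_real, inner_add_left, inner_add_right]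
      rw [real_inner_comm x v, real_inner_comm x q.1, real_inner_comm v q.2]
      ring
    simp only [WithLp.prod_norm_sq_eq_of_L2, WithLp.sub_fst, WithLp.sub_snd, WithLp.toLp_fst,
      WithLp.toLp_snd] at hq_growth hp₀_min
    linarith
  have hmem : (-v, -x) ∈ graphH T := hT.2 _ fun q hq => by
    have : ⟪-v - q.1, -x - q.2⟫ = ⟪q.1 + v, q.2 + x⟫ := by
      rw [← inner_neg_neg]; congr 1 <;> abel
    simpa [this] using (sq_nonneg _).trans (hkey q hq)
  have hzero : x + v = 0 := by simpa using hkey _ hmem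
  exact ⟨_, hmem, by rw [← neg_add, add_comm, hzero, neg_zero]⟩

lemma MaxMonotoneOpH.sub_const (hT : MaxMonotoneOpH T) (u : E) :
    MaxMonotoneOpH fun a => {b | b + u ∈ T a} := by
  refine ⟨fun p q hp hq => ?_, fun p hp => hT.2 (p.1, p.2 + u) fun q hq => ?_⟩
  · simpa using hT.1 (p := (p.1, p.2 + u)) (q := (q.1, q.2 + u)) hp hq
  · simpa [sub_sub_eq_add_sub] using hp (q.1, q.2 - u) (by simpa [graphH] using hq)

theorem MaxMonotoneOpH.exists_add_eq [CompleteSpace E] (hT : MaxMonotoneOpH T) (u : E) :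
    ∃ p ∈ graphH T, p.1 + p.2 = u := by
  obtain ⟨p, hp, hsum⟩ := (hT.sub_const u).exists_add_eq_zero
  exact ⟨(p.1, p.2 + u), hp, by rw [← add_assoc, hsum, zero_add]⟩

lemma coe_le_fitzH_of_mem_graphH {p : E × E} (hp : p ∈ graphH T) (x v : E) :
    ((⟪x, v⟫ - ⟪x - p.1, v - p.2⟫ : ℝ) : EReal) ≤ FitzH T x v := by
  refine le_iSup₂_of_le p hp (le_of_eq ?_)
  simp only [inner_sub_left, inner_sub_right]
  ring_nf

end MaximalMonotone

/-- Improved strong Fitzpatrick inequality in a Hilbert space. -/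
theorem improved_strong_fitzpatrick (T : H → Set H) (hT : MaxMonotoneOpH T) (x v : H) :
    ((⟪x, v⟫ +
        (1 / 2) * sInf {r : ℝ | ∃ p ∈ graphH T, r = ‖x - p.1‖ ^ 2 + ‖v - p.2‖ ^ 2} : ℝ) :
      EReal) ≤ FitzH T x v := by
  obtain ⟨p, hp, hsum⟩ := hT.exists_add_eq (x + v)
  have hv : v - p.2 = -(x - p.1) := by linear_combination (norm := module) -hsum
  have hinf : sInf {r : ℝ | ∃ p ∈ graphH T, r = ‖x - p.1‖ ^ 2 + ‖v - p.2‖ ^ 2} ≤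
      ‖x - p.1‖ ^ 2 + ‖v - p.2‖ ^ 2 :=
    csInf_le ⟨0, by rintro r ⟨q, -, rfl⟩; positivity⟩ ⟨p, hp, rfl⟩
  refine le_trans (EReal.coe_le_coe_iff.mpr ?_) (coe_le_fitzH_of_mem_graphH hp x v)
  rw [hv, norm_neg] at hinf
  rw [hv, inner_neg_right, real_inner_self_eq_norm_sq]
  linarith
end

section
/- Let X be 2-uniformly convex with constant μ > 0 (so that ‖x‖² + ‖y‖² − (1/2)‖x+y‖² ≥ (μ/2)‖x−y‖² for all x,y ∈ X). Then the normalized duality mapping J_X is strongly monotone with constant μ/2: for all x, y ∈ X, v ∈ J_X(x), w ∈ J_X(y), one has ⟨x − y, v − w⟩ ≥ (μ/2)‖x − y‖². -/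
/-! Every `v ∈ J(x)` is a subgradient of `½‖·‖²` at `x`. Adding the subgradient inequalities of
`v ∈ J(x)` and `w ∈ J(y)` at the midpoint `(x + y)/2` bounds the midpoint-convexity defect
`‖x‖² + ‖y‖² - ½‖x + y‖²` by `(v - w)(x - y)`, and 2-uniform convexity bounds that defect
below by `μ/2 ‖x - y‖²`. -/

open NormedSpace

variable {X : Type*} [NormedAddCommGroup X] [NormedSpace ℝ X]

theorem SubdiffB.add_sub_two_mul_midpoint_le {f : X → ℝ} {x y : X} {v w : StrongDual ℝ X}
    (hv : v ∈ SubdiffB f x) (hw : w ∈ SubdiffB f y) :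
    f x + f y - 2 * f ((2 : ℝ)⁻¹ • (x + y)) ≤ (v - w) (x - y) / 2 := by
  have hvx := hv ((2 : ℝ)⁻¹ • (x + y))
  have hwy := hw ((2 : ℝ)⁻¹ • (x + y))
  have hx : (2 : ℝ)⁻¹ • (x + y) - x = -((2 : ℝ)⁻¹ • (x - y)) := by module
  have hy : (2 : ℝ)⁻¹ • (x + y) - y = (2 : ℝ)⁻¹ • (x - y) := by module
  rw [hx, map_neg, map_smul, smul_eq_mul] at hvx
  rw [hy, map_smul, smul_eq_mul] at hwy
  rw [sub_apply]
  linarith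

theorem jdualMap_subset_subdiffB (x : X) :
    JdualMap x ⊆ SubdiffB (fun z ↦ ‖z‖ ^ 2 / 2) x := by
  rintro v ⟨hvx, hv⟩ z
  have hvz : v z ≤ ‖x‖ * ‖z‖ := hv ▸ (le_abs_self _).trans (v.le_opNorm z)
  rw [map_sub, hvx, hv]
  nlinarith [sq_nonneg (‖x‖ - ‖z‖)]

theorem duality_map_strongly_monotone_general
    (μ : ℝ)
    (hineq : ∀ x y : X, μ / 2 * ‖x - y‖ ^ 2 ≤ ‖x‖ ^ 2 + ‖y‖ ^ 2 - (1 / 2) * ‖x + y‖ ^ 2) :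
    ∀ x y : X, ∀ v ∈ JdualMap x, ∀ w ∈ JdualMap y,
      μ / 2 * ‖x - y‖ ^ 2 ≤ (v - w) (x - y) := by
  intro x y v hv w hw
  have hmid := SubdiffB.add_sub_two_mul_midpoint_le
    (jdualMap_subset_subdiffB x hv) (jdualMap_subset_subdiffB y hw)
  have hnorm : ‖(2 : ℝ)⁻¹ • (x + y)‖ ^ 2 = ‖x + y‖ ^ 2 / 4 := by
    rw [norm_smul, mul_pow, norm_inv, Real.norm_two]
    ring
  rw [hnorm] at hmid
  linarith [hineq x y]

/-- The normalized duality mapping on a `2`-uniformly convex space is strongly monotone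
with constant `μ/2`. -/
theorem duality_map_strongly_monotone
    (μ : ℝ) (hμ : 0 < μ)
    (hineq : ∀ x y : X, μ / 2 * ‖x - y‖ ^ 2 ≤ ‖x‖ ^ 2 + ‖y‖ ^ 2 - (1 / 2) * ‖x + y‖ ^ 2) :
    ∀ x y : X, ∀ v ∈ JdualMap x, ∀ w ∈ JdualMap y,
      μ / 2 * ‖x - y‖ ^ 2 ≤ (v - w) (x - y) :=
  duality_map_strongly_monotone_general μ hineq
end

section
/- Let X be a 2-uniformly convex real Banach space with constant μ > 0 and T : X ⇉ X* maximally monotone. Then for every (x,v) ∈ X × X* and λ > 0: F_T(x,v) − ⟨x,v⟩ ≥ (μ/(2λ)) · max_{x' ∈ J_X(x)} ‖x − (J_X + λT)⁻¹(x' + λv)‖². -/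
open NormedSpace

variable {X : Type*} [NormedAddCommGroup X] [NormedSpace ℝ X]

/-! The normalized duality mapping `J` of a `2`-uniformly convex space is strongly monotone with
constant `μ / 2`: for unit vectors `u, z`, uniform convexity gives `‖u + z‖ ≤ 2 - 2μ‖u - z‖²`, so a
norming functional of `u` is at most `1 - 2μ‖u - z‖²` at `z`. This bounds the cross terms of
`⟨x - w, x' - j⟩` for `x' ∈ J x`, `j ∈ J w`, while `x - w = ‖w‖ (u - z) + (‖x‖ - ‖w‖) u` when
`‖w‖ ≤ ‖x‖` and `μ ≤ 1/4` controls `‖x - w‖`. If `x' + λ v = j + λ t` with `t ∈ T w`, then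
`λ ⟨x - w, t - v⟩ = ⟨x - w, x' - j⟩`, and `(w, t)` is one of the competitors in the supremum
defining the Fitzpatrick function. -/

namespace TwoUniformlyConvex

variable {μ : ℝ}

theorem norm_add_le (h : TwoUniformlyConvex X μ) {u z : X} (hu : ‖u‖ = 1) (hz : ‖z‖ = 1) :
    ‖u + z‖ ≤ 2 - 2 * μ * ‖u - z‖ ^ 2 := by
  have hε : ‖u - z‖ ≤ 2 := (norm_sub_le u z).trans (by rw [hu, hz]; norm_num)
  have := h _ ⟨norm_nonneg _, hε⟩ u z hu hz le_rfl
  rw [norm_smul, Real.norm_of_nonneg (by norm_num)] at this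
  linarith

theorem four_mul_le_one [Nontrivial X] (h : TwoUniformlyConvex X μ) : 4 * μ ≤ 1 := by
  obtain ⟨u, hu⟩ := exists_norm_eq X zero_le_one
  have := h.norm_add_le hu (by rwa [norm_neg])
  rw [add_neg_cancel, norm_zero, sub_neg_eq_add, ← two_smul ℝ, norm_smul, hu] at this
  norm_num at this
  linarith

theorem apply_le_of_apply_eq_norm (h : TwoUniformlyConvex X μ) {u z : X} (hu : ‖u‖ = 1)
    (hz : ‖z‖ = 1) {f : StrongDual ℝ X} (hf : f u = ‖f‖) :
    f z ≤ ‖f‖ * (1 - 2 * μ * ‖u - z‖ ^ 2) := by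
  have hsum : f u + f z ≤ ‖f‖ * ‖u + z‖ := by
    rw [← map_add]; exact (le_abs_self _).trans (f.le_opNorm _)
  nlinarith [mul_le_mul_of_nonneg_left (h.norm_add_le hu hz) (norm_nonneg f)]

end TwoUniformlyConvex

namespace JdualMap

variable {x : X} {v : StrongDual ℝ X}

theorem apply_self (hv : v ∈ JdualMap x) : v x = ‖x‖ ^ 2 := by
  rw [hv.1, hv.2, sq]

theorem apply_le_of_twoUniformlyConvex {μ : ℝ} (h : TwoUniformlyConvex X μ) (hv : v ∈ JdualMap x)
    (hx : x ≠ 0) {w : X} (hw : w ≠ 0) :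
    v w ≤ ‖x‖ * ‖w‖ * (1 - 2 * μ * ‖‖x‖⁻¹ • x - ‖w‖⁻¹ • w‖ ^ 2) := by
  have hxu : ‖‖x‖⁻¹ • x‖ = 1 := norm_smul_inv_norm hx
  have hwz : ‖‖w‖⁻¹ • w‖ = 1 := norm_smul_inv_norm hw
  have hvu : v (‖x‖⁻¹ • x) = ‖v‖ := by
    rw [map_smul, apply_self hv, hv.2, smul_eq_mul]
    field_simp [norm_ne_zero_iff.2 hx]
  have := h.apply_le_of_apply_eq_norm hxu hwz hvu
  rw [map_smul, smul_eq_mul, hv.2] at this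
  calc v w = ‖w‖ * (‖w‖⁻¹ * v w) := by field_simp [norm_ne_zero_iff.2 hw]
    _ ≤ ‖w‖ * (‖x‖ * (1 - 2 * μ * ‖‖x‖⁻¹ • x - ‖w‖⁻¹ • w‖ ^ 2)) :=
      mul_le_mul_of_nonneg_left this (norm_nonneg w)
    _ = _ := by ring

theorem stronglyMonotone {μ : ℝ} (h : TwoUniformlyConvex X μ) (hμ : 0 ≤ μ) :
    StronglyMonotoneB (JdualMap (X := X)) (μ / 2) := by
  intro x w x' j hx' hj
  wlog hwx : ‖w‖ ≤ ‖x‖ generalizing x w x' j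
  · have := this hj hx' (le_of_not_ge hwx)
    rwa [norm_sub_rev, ← neg_sub x' j, ← neg_sub x w, neg_apply, map_neg,
      neg_neg] at this
  rcases eq_or_ne x w with rfl | hxw
  · simp
  have : Nontrivial X := ⟨⟨x, w, hxw⟩⟩
  have hμ₁ := h.four_mul_le_one
  rcases eq_or_ne w 0 with rfl | hw
  · have hj₀ : j = 0 := norm_eq_zero.1 (hj.2.trans norm_zero)
    simp only [hj₀, sub_zero, apply_self hx']
    nlinarith [sq_nonneg ‖x‖]
  have hx : x ≠ 0 := norm_pos_iff.1 ((norm_pos_iff.2 hw).trans_le hwx)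
  have hx'w := apply_le_of_twoUniformlyConvex h hx' hx hw
  have hjx := apply_le_of_twoUniformlyConvex h hj hw hx
  rw [norm_sub_rev] at hjx
  rw [sub_apply, map_sub, map_sub, apply_self hx', apply_self hj]
  set a := ‖x‖
  set b := ‖w‖
  set u := a⁻¹ • x
  set z := b⁻¹ • w
  set ε := ‖u - z‖
  have hb : 0 < b := norm_pos_iff.2 hw
  have hdist : ‖x - w‖ ≤ b * ε + (a - b) := by
    have hxu : x = a • u := (smul_inv_smul₀ (norm_ne_zero_iff.2 hx) x).symm
    have hwz : w = b • z := (smul_inv_smul₀ hb.ne' w).symm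
    have hu : ‖u‖ = 1 := norm_smul_inv_norm hx
    calc ‖x - w‖ = ‖b • (u - z) + (a - b) • u‖ := by rw [hxu, hwz]; congr 1; module
      _ ≤ ‖b • (u - z)‖ + ‖(a - b) • u‖ := norm_add_le _ _
      _ = b * ε + (a - b) := by
        rw [norm_smul, norm_smul, hu, Real.norm_of_nonneg hb.le,
          Real.norm_of_nonneg (sub_nonneg.2 hwx), mul_one]
  have hsq : ‖x - w‖ ^ 2 ≤ 2 * (b * ε) ^ 2 + 2 * (a - b) ^ 2 := by
    nlinarith [pow_le_pow_left₀ (norm_nonneg _) hdist 2, sq_nonneg (b * ε - (a - b))]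
  nlinarith [mul_le_mul_of_nonneg_left hsq hμ,
    mul_nonneg (by linarith : 0 ≤ 1 - μ) (sq_nonneg (a - b)),
    mul_nonneg (mul_nonneg hμ (mul_nonneg hb.le (sub_nonneg.2 hwx))) (sq_nonneg ε)]

end JdualMap

theorem coe_le_fitzB_s17 {T : X → Set (StrongDual ℝ X)} {w : X} {t : StrongDual ℝ X} (ht : t ∈ T w)
    (x : X) (v : StrongDual ℝ X) : ((t x + v w - t w : ℝ) : EReal) ≤ FitzB T x v :=
  le_iSup₂ (f := fun (p : X × StrongDual ℝ X) (_ : p ∈ graphB T) =>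
    ((p.2 x + v p.1 - p.2 p.1 : ℝ) : EReal)) (w, t) ht

/-- `heq` says that `w = (B + lam • T)⁻¹ (x' + lam • v)`. -/
theorem coe_add_le_fitzB_of_stronglyMonotone {B T : X → Set (StrongDual ℝ X)} {c lam : ℝ}
    (hB : StronglyMonotoneB B c) (hlam : 0 < lam) {x w : X} {x' j t v : StrongDual ℝ X}
    (hx' : x' ∈ B x) (hj : j ∈ B w) (ht : t ∈ T w) (heq : x' + lam • v = j + lam • t) :
    ((v x + c / lam * ‖x - w‖ ^ 2 : ℝ) : EReal) ≤ FitzB T x v := by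
  have hres : x' - j = lam • (t - v) := by
    rw [smul_sub, sub_eq_sub_iff_add_eq_add, heq, add_comm]
  have hmono := hB hx' hj
  rw [hres, smul_apply, smul_eq_mul] at hmono
  have hdiv : c / lam * ‖x - w‖ ^ 2 ≤ (t - v) (x - w) := by
    rw [div_mul_eq_mul_div, div_le_iff₀ hlam]; linarith
  refine le_trans (EReal.coe_le_coe_iff.2 ?_) (coe_le_fitzB_s17 ht x v)
  rw [sub_apply, map_sub, map_sub] at hdiv
  linarith

theorem carlier_inequality_two_uniformly_convex_general
    (μ : ℝ) (hμ : 0 < μ) (h2uc : TwoUniformlyConvex X μ)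
    (T : X → Set (StrongDual ℝ X))
    (x : X) (v : StrongDual ℝ X) (lam : ℝ) (hlam : 0 < lam) :
    ∀ x' ∈ JdualMap x, ∀ w : X,
      (∃ j ∈ JdualMap w, ∃ t ∈ T w, x' + lam • v = j + lam • t) →
      ((v x + μ / (2 * lam) * ‖x - w‖ ^ 2 : ℝ) : EReal) ≤ FitzB T x v := by
  rintro x' hx' w ⟨j, hj, t, ht, heq⟩
  have := coe_add_le_fitzB_of_stronglyMonotone (JdualMap.stronglyMonotone h2uc hμ.le) hlam
    hx' hj ht heq
  rwa [div_div] at this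

/-- Carlier-type inequality on a `2`-uniformly convex Banach space, in terms of the
normalized duality mapping. -/
theorem carlier_inequality_two_uniformly_convex [CompleteSpace X]
    (μ : ℝ) (hμ : 0 < μ) (h2uc : TwoUniformlyConvex X μ)
    (T : X → Set (StrongDual ℝ X)) (hT : MaxMonotoneOpB T)
    (x : X) (v : StrongDual ℝ X) (lam : ℝ) (hlam : 0 < lam) :
    ∀ x' ∈ JdualMap x, ∀ w : X,
      (∃ j ∈ JdualMap w, ∃ t ∈ T w, x' + lam • v = j + lam • t) →
      ((v x + μ / (2 * lam) * ‖x - w‖ ^ 2 : ℝ) : EReal) ≤ FitzB T x v :=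
  carlier_inequality_two_uniformly_convex_general μ hμ h2uc T x v lam hlam
end

section
/- For p ∈ (1, 2], the space L^p is 2-uniformly convex with constant (p−1)/8; that is, its modulus of convexity satisfies δ_{L^p}(ε) ≥ ((p−1)/8) ε² for all ε ∈ [0,2]. -/
/-!
Pointwise, for `1 < p ≤ 2` and real `u`, `v`,
`(u ^ 2 + (p - 1) * v ^ 2) ^ (p / 2) ≤ (|u + v| ^ p + |u - v| ^ p) / 2`.
Scaling to `|v| ≤ |u| = 1`, this is Bernoulli's inequality combined with
`2 + p (p - 1) t ^ 2 ≤ (1 + t) ^ p + (1 - t) ^ p`, which holds because the difference of the two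
sides is an even convex function on `[-1, 1]`. Applied to `u = (f + g) / 2`, `v = (f - g) / 2`
and integrated, the reverse Minkowski inequality in `L^(p/2)` (a consequence of the concavity of
`x ↦ x ^ (p / 2)`) and the power mean inequality give the Ball–Carlen–Lieb inequality
`‖(f + g) / 2‖ ^ 2 + (p - 1) ‖(f - g) / 2‖ ^ 2 ≤ (‖f‖ ^ 2 + ‖g‖ ^ 2) / 2`.
For unit vectors with `ε ≤ ‖f - g‖` it bounds `‖(f + g) / 2‖` by
`√(1 - (p - 1) ε ^ 2 / 4) ≤ 1 - (p - 1) ε ^ 2 / 8`.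
-/

open MeasureTheory Set
open scoped ENNReal NNReal

namespace Real

variable {p : ℝ}

lemma two_le_one_add_rpow_add_one_sub_rpow {s t : ℝ} (hs : s ≤ 0) (ht : |t| < 1) :
    2 ≤ (1 + t) ^ s + (1 - t) ^ s := by
  obtain ⟨ht₁, ht₂⟩ := abs_lt.mp ht
  have ha : 0 < (1 + t) ^ s := rpow_pos_of_pos (by linarith) s
  have hb : 0 < (1 - t) ^ s := rpow_pos_of_pos (by linarith) s
  have hab : 1 ≤ (1 + t) ^ s * (1 - t) ^ s := by
    rw [← mul_rpow (by linarith) (by linarith)]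
    exact one_le_rpow_of_pos_of_le_one_of_nonpos (by nlinarith) (by nlinarith [sq_nonneg t]) hs
  nlinarith [sq_nonneg ((1 + t) ^ s - (1 - t) ^ s)]

lemma convexOn_one_add_rpow_add_one_sub_rpow_sub_mul_sq (hp : 1 < p) (hp2 : p ≤ 2) :
    ConvexOn ℝ (Icc (-1) 1) fun t ↦ (1 + t) ^ p + (1 - t) ^ p - p * (p - 1) * t ^ 2 := by
  refine convexOn_of_hasDerivWithinAt2_nonneg (convex_Icc _ _)
    (f' := fun t ↦ p * (1 + t) ^ (p - 1) - p * (1 - t) ^ (p - 1) - 2 * p * (p - 1) * t)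
    (f'' := fun t ↦ p * (p - 1) * ((1 + t) ^ (p - 2) + (1 - t) ^ (p - 2) - 2)) ?_ ?_ ?_ ?_
  · have := continuous_rpow_const (q := p) (by linarith)
    exact Continuous.continuousOn (by fun_prop)
  · intro x _
    have h₁ := ((hasDerivAt_id' x).const_add 1).rpow_const (p := p) (Or.inr hp.le)
    have h₂ := ((hasDerivAt_id' x).const_sub 1).rpow_const (p := p) (Or.inr hp.le)
    have h₃ := (hasDerivAt_pow 2 x).const_mul (p * (p - 1))
    exact (((h₁.add h₂).sub h₃).congr_deriv (by push_cast; ring)).hasDerivWithinAt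
  · intro x hx
    rw [interior_Icc] at hx
    have h₁ := ((hasDerivAt_id' x).const_add 1).rpow_const (p := p - 1)
      (Or.inl (by linarith [hx.1] : 0 < 1 + x).ne')
    have h₂ := ((hasDerivAt_id' x).const_sub 1).rpow_const (p := p - 1)
      (Or.inl (by linarith [hx.2] : 0 < 1 - x).ne')
    have h₃ := (hasDerivAt_id' x).const_mul (2 * p * (p - 1))
    refine ((((h₁.const_mul p).sub (h₂.const_mul p)).sub h₃).congr_deriv ?_).hasDerivWithinAt
    rw [show p - 1 - 1 = p - 2 by ring]
    ring
  · intro t ht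
    rw [interior_Icc] at ht
    have := two_le_one_add_rpow_add_one_sub_rpow (s := p - 2) (by linarith) (abs_lt.mpr ht)
    exact mul_nonneg (by nlinarith) (by linarith)

lemma two_add_mul_sq_le_one_add_rpow_add_one_sub_rpow (hp : 1 < p) (hp2 : p ≤ 2) {t : ℝ}
    (ht : |t| ≤ 1) : 2 + p * (p - 1) * t ^ 2 ≤ (1 + t) ^ p + (1 - t) ^ p := by
  obtain ⟨ht₁, ht₂⟩ := abs_le.mp ht
  have key := (convexOn_one_add_rpow_add_one_sub_rpow_sub_mul_sq hp hp2).2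
    (⟨ht₁, ht₂⟩ : t ∈ Icc (-1 : ℝ) 1) (⟨by linarith, by linarith⟩ : -t ∈ Icc (-1 : ℝ) 1)
    (by norm_num : (0 : ℝ) ≤ 1 / 2) (by norm_num : (0 : ℝ) ≤ 1 / 2) (by norm_num)
  -- the function is even, so its value at `0` is below the average of its values at `±t`
  simp only [smul_eq_mul, mul_neg, add_neg_cancel, add_zero, sub_zero, one_rpow,
    ← sub_eq_add_neg, sub_neg_eq_add, neg_sq] at key
  linarith

lemma one_add_mul_sq_rpow_le (hp : 1 < p) (hp2 : p ≤ 2) {t : ℝ} (ht : |t| ≤ 1) :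
    (1 + (p - 1) * t ^ 2) ^ (p / 2) ≤ ((1 + t) ^ p + (1 - t) ^ p) / 2 := by
  have bernoulli := rpow_one_add_le_one_add_mul_self (s := (p - 1) * t ^ 2) (by nlinarith)
    (p := p / 2) (by linarith) (by linarith)
  linarith [two_add_mul_sq_le_one_add_rpow_add_one_sub_rpow hp hp2 ht]

lemma sq_add_mul_sq_rpow_le_of_abs_le (hp : 1 < p) (hp2 : p ≤ 2) {u v : ℝ} (huv : |v| ≤ |u|) :
    (u ^ 2 + (p - 1) * v ^ 2) ^ (p / 2) ≤ (|u + v| ^ p + |u - v| ^ p) / 2 := by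
  rcases eq_or_ne u 0 with rfl | hu
  · obtain rfl : v = 0 := abs_nonpos_iff.mp (by simpa using huv)
    simp [zero_rpow (by positivity : p / 2 ≠ 0), zero_rpow (by positivity : p ≠ 0)]
  set t := v / u
  have ht : |t| ≤ 1 := by
    rw [abs_div]
    exact div_le_one_of_le₀ huv (abs_nonneg u)
  obtain ⟨ht₁, ht₂⟩ := abs_le.mp ht
  have hv : v = u * t := (mul_div_cancel₀ v hu).symm
  have hsq : (u ^ 2) ^ (p / 2) = |u| ^ p := by
    rw [← sq_abs, ← rpow_natCast, ← rpow_mul (abs_nonneg u), Nat.cast_ofNat,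
      mul_div_cancel₀ p two_ne_zero]
  calc (u ^ 2 + (p - 1) * v ^ 2) ^ (p / 2) = |u| ^ p * (1 + (p - 1) * t ^ 2) ^ (p / 2) := by
        rw [hv, show u ^ 2 + (p - 1) * (u * t) ^ 2 = u ^ 2 * (1 + (p - 1) * t ^ 2) by ring,
          mul_rpow (sq_nonneg u) (by nlinarith), hsq]
    _ ≤ |u| ^ p * (((1 + t) ^ p + (1 - t) ^ p) / 2) := by
        gcongr
        exact one_add_mul_sq_rpow_le hp hp2 ht
    _ = (|u + v| ^ p + |u - v| ^ p) / 2 := by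
        rw [hv, ← mul_one_add, ← mul_one_sub, abs_mul, abs_mul,
          abs_of_nonneg (by linarith : 0 ≤ 1 + t), abs_of_nonneg (by linarith : 0 ≤ 1 - t),
          mul_rpow (abs_nonneg u) (by linarith), mul_rpow (abs_nonneg u) (by linarith)]
        ring

lemma sq_add_mul_sq_rpow_le (hp : 1 < p) (hp2 : p ≤ 2) (u v : ℝ) :
    (u ^ 2 + (p - 1) * v ^ 2) ^ (p / 2) ≤ (|u + v| ^ p + |u - v| ^ p) / 2 := by
  rcases le_total |v| |u| with huv | huv
  · exact sq_add_mul_sq_rpow_le_of_abs_le hp hp2 huv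
  -- otherwise swap `u` and `v`: the right side is symmetric and the left side only grows
  have hsq : u ^ 2 ≤ v ^ 2 := sq_le_sq.mpr huv
  calc (u ^ 2 + (p - 1) * v ^ 2) ^ (p / 2) ≤ (v ^ 2 + (p - 1) * u ^ 2) ^ (p / 2) :=
        rpow_le_rpow (by nlinarith [sq_nonneg v]) (by nlinarith) (by linarith)
    _ ≤ (|v + u| ^ p + |v - u| ^ p) / 2 := sq_add_mul_sq_rpow_le_of_abs_le hp hp2 huv
    _ = (|u + v| ^ p + |u - v| ^ p) / 2 := by rw [add_comm v, abs_sub_comm]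

lemma enorm_sq_add_mul_enorm_sq_rpow_le (hp : 1 < p) (hp2 : p ≤ 2) (u v : ℝ) :
    (‖u‖ₑ ^ 2 + ENNReal.ofReal (p - 1) * ‖v‖ₑ ^ 2) ^ (p / 2)
      ≤ (‖u + v‖ₑ ^ p + ‖u - v‖ₑ ^ p) / 2 := by
  simp only [enorm_eq_ofReal_abs]
  rw [← ENNReal.ofReal_pow (abs_nonneg u), ← ENNReal.ofReal_pow (abs_nonneg v), sq_abs, sq_abs,
    ← ENNReal.ofReal_mul (by linarith),
    ← ENNReal.ofReal_add (sq_nonneg u) (by nlinarith [sq_nonneg v]),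
    ENNReal.ofReal_rpow_of_nonneg (by nlinarith [sq_nonneg u, sq_nonneg v]) (by linarith),
    ENNReal.ofReal_rpow_of_nonneg (abs_nonneg _) (by linarith),
    ENNReal.ofReal_rpow_of_nonneg (abs_nonneg _) (by linarith),
    ← ENNReal.ofReal_add (by positivity) (by positivity),
    ← ENNReal.ofReal_ofNat 2, ← ENNReal.ofReal_div_of_pos two_pos]
  exact ENNReal.ofReal_le_ofReal (sq_add_mul_sq_rpow_le hp hp2 u v)

end Real

section ReverseMinkowski

variable {r : ℝ}

lemma Real.rpow_mul_rpow_add_rpow_mul_rpow_le (hr0 : 0 < r) (hr1 : r ≤ 1) {l m x y : ℝ}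
    (hl : 0 ≤ l) (hm : 0 ≤ m) (hlm : l + m = 1) (hx : 0 ≤ x) (hy : 0 ≤ y) :
    l ^ (1 - r) * x ^ r + m ^ (1 - r) * y ^ r ≤ (x + y) ^ r := by
  rcases (add_nonneg hx hy).eq_or_lt with hS | hS
  · obtain ⟨rfl, rfl⟩ : x = 0 ∧ y = 0 := ⟨by linarith, by linarith⟩
    simp [zero_rpow hr0.ne']
  -- weighted AM-GM for `w` and `z / (x + y)` with weights `1 - r` and `r`
  have amgm : ∀ {w z : ℝ}, 0 ≤ w → 0 ≤ z →
      w ^ (1 - r) * z ^ r ≤ ((1 - r) * w + r * (z / (x + y))) * (x + y) ^ r := by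
    intro w z hw hz
    calc w ^ (1 - r) * z ^ r = w ^ (1 - r) * (z / (x + y)) ^ r * (x + y) ^ r := by
          rw [div_rpow hz hS.le, mul_assoc, div_mul_cancel₀ _ (rpow_pos_of_pos hS r).ne']
      _ ≤ _ := by
          gcongr
          exact geom_mean_le_arith_mean2_weighted (by linarith) hr0.le hw (by positivity)
            (by ring)
  calc l ^ (1 - r) * x ^ r + m ^ (1 - r) * y ^ r
      ≤ ((1 - r) * l + r * (x / (x + y))) * (x + y) ^ r
        + ((1 - r) * m + r * (y / (x + y))) * (x + y) ^ r := add_le_add (amgm hl hx) (amgm hm hy)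
    _ = (x + y) ^ r := by
        rw [← add_mul, add_add_add_comm, ← mul_add, ← mul_add, hlm, ← add_div,
          div_self hS.ne']
        ring

lemma ENNReal.rpow_mul_rpow_add_rpow_mul_rpow_le (hr0 : 0 < r) (hr1 : r ≤ 1) {l m : ℝ≥0∞}
    (hlm : l + m = 1) (x y : ℝ≥0∞) :
    l ^ (1 - r) * x ^ r + m ^ (1 - r) * y ^ r ≤ (x + y) ^ r := by
  have hl : l ≠ ⊤ := ne_top_of_le_ne_top one_ne_top (hlm ▸ le_self_add)
  have hm : m ≠ ⊤ := ne_top_of_le_ne_top one_ne_top (hlm ▸ le_add_self)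
  rcases eq_or_ne x ⊤ with rfl | hx
  · simp [top_rpow_of_pos hr0]
  rcases eq_or_ne y ⊤ with rfl | hy
  · simp [top_rpow_of_pos hr0]
  lift l to ℝ≥0 using hl
  lift m to ℝ≥0 using hm
  lift x to ℝ≥0 using hx
  lift y to ℝ≥0 using hy
  have h1r : 0 ≤ 1 - r := by linarith
  rw [← coe_rpow_of_nonneg _ h1r, ← coe_rpow_of_nonneg _ h1r, ← coe_rpow_of_nonneg _ hr0.le,
    ← coe_rpow_of_nonneg _ hr0.le, ← coe_add, ← coe_rpow_of_nonneg _ hr0.le]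
  norm_cast
  rw [← NNReal.coe_le_coe]
  push_cast
  exact Real.rpow_mul_rpow_add_rpow_mul_rpow_le hr0 hr1 l.2 m.2 (by exact_mod_cast hlm) x.2 y.2

lemma ENNReal.exists_add_eq_one_rpow_add_le (hr0 : 0 < r) (hr1 : r ≤ 1) (A B : ℝ≥0∞) :
    ∃ l m : ℝ≥0∞, l + m = 1 ∧ (A + B) ^ r ≤ l ^ (1 - r) * A ^ r + m ^ (1 - r) * B ^ r := by
  rcases eq_or_ne A ⊤ with rfl | hA
  · exact ⟨1, 0, add_zero 1, by simp [top_rpow_of_pos hr0]⟩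
  rcases eq_or_ne B ⊤ with rfl | hB
  · exact ⟨0, 1, zero_add 1, by simp [top_rpow_of_pos hr0]⟩
  rcases eq_or_ne (A + B) 0 with hS | hS
  · exact ⟨1, 0, add_zero 1, by simp [hS, zero_rpow_of_pos hr0]⟩
  have hS' : A + B ≠ ⊤ := add_ne_top.mpr ⟨hA, hB⟩
  have h1r : 0 ≤ 1 - r := by linarith
  -- the optimal weights `A / (A + B)` and `B / (A + B)` turn the inequality into an equality
  have weight : ∀ C : ℝ≥0∞, (C / (A + B)) ^ (1 - r) * C ^ r = C * ((A + B) ^ (1 - r))⁻¹ := by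
    intro C
    rw [div_rpow_of_nonneg _ _ h1r, div_eq_mul_inv, mul_right_comm,
      ← rpow_add_of_nonneg _ _ h1r hr0.le, sub_add_cancel, rpow_one]
  refine ⟨A / (A + B), B / (A + B), by rw [ENNReal.div_add_div_same, ENNReal.div_self hS hS'],
    le_of_eq ?_⟩
  have h0 : (A + B) ^ (1 - r) ≠ 0 := (rpow_pos (pos_iff_ne_zero.2 hS) hS').ne'
  have htop : (A + B) ^ (1 - r) ≠ ⊤ := rpow_ne_top_of_nonneg h1r hS'
  rw [weight, weight, ← add_mul]
  calc (A + B) ^ r = (A + B) ^ r * (A + B) ^ (1 - r) * ((A + B) ^ (1 - r))⁻¹ := by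
        rw [mul_assoc, ENNReal.mul_inv_cancel h0 htop, mul_one]
    _ = (A + B) * ((A + B) ^ (1 - r))⁻¹ := by
        rw [← rpow_add_of_nonneg _ _ hr0.le h1r, add_sub_cancel, rpow_one]

lemma ENNReal.lintegral_Lp_add_lintegral_Lp_le {α : Type*} [MeasurableSpace α] (μ : Measure α)
    (hr0 : 0 < r) (hr1 : r ≤ 1) (f g : α → ℝ≥0∞) :
    (∫⁻ a, f a ^ r ∂μ) ^ r⁻¹ + (∫⁻ a, g a ^ r ∂μ) ^ r⁻¹ ≤ (∫⁻ a, (f a + g a) ^ r ∂μ) ^ r⁻¹ := by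
  obtain ⟨l, m, hlm, hle⟩ := exists_add_eq_one_rpow_add_le hr0 hr1
    ((∫⁻ a, f a ^ r ∂μ) ^ r⁻¹) ((∫⁻ a, g a ^ r ∂μ) ^ r⁻¹)
  have hl : l ^ (1 - r) ≠ ⊤ :=
    rpow_ne_top_of_nonneg (by linarith) (ne_top_of_le_ne_top one_ne_top (hlm ▸ le_self_add))
  have hm : m ^ (1 - r) ≠ ⊤ :=
    rpow_ne_top_of_nonneg (by linarith) (ne_top_of_le_ne_top one_ne_top (hlm ▸ le_add_self))
  rw [le_rpow_inv_iff hr0]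
  refine hle.trans ?_
  rw [rpow_inv_rpow hr0.ne', rpow_inv_rpow hr0.ne', ← lintegral_const_mul' _ _ hl,
    ← lintegral_const_mul' _ _ hm]
  exact (le_lintegral_add _ _).trans
    (lintegral_mono fun a ↦ rpow_mul_rpow_add_rpow_mul_rpow_le hr0 hr1 hlm _ _)

end ReverseMinkowski

lemma ENNReal.rpow_add_rpow_div_two_rpow_le {p q : ℝ} (hp : 0 < p) (hpq : p ≤ q) (a b : ℝ≥0∞) :
    ((a ^ p + b ^ p) / 2) ^ (q / p) ≤ (a ^ q + b ^ q) / 2 := by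
  have hmean := rpow_arith_mean_le_arith_mean2_rpow 2⁻¹ 2⁻¹ (a ^ p) (b ^ p) inv_two_add_inv_two
    ((one_le_div hp).mpr hpq)
  rw [← rpow_mul, ← rpow_mul, mul_div_cancel₀ q hp.ne', ← mul_add, ← mul_add] at hmean
  simpa only [ENNReal.div_eq_inv_mul] using hmean

namespace MeasureTheory.Lp

variable {Ω E : Type*} [MeasurableSpace Ω] [NormedAddCommGroup E] {ν : Measure Ω} {p : ℝ}

lemma lintegral_rpow_enorm_eq_enorm_rpow (hp : 0 < p) (h : Lp E (ENNReal.ofReal p) ν) :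
    ∫⁻ a, ‖h a‖ₑ ^ p ∂ν = ‖h‖ₑ ^ p := by
  rw [enorm_def, eLpNorm_eq_eLpNorm' (by simpa using hp) ENNReal.ofReal_ne_top,
    ENNReal.toReal_ofReal hp.le, lintegral_rpow_enorm_eq_rpow_eLpNorm' hp]

lemma lintegral_mul_enorm_sq_rpow_half (hp : 0 < p) {c : ℝ≥0∞} (hc : c ≠ ⊤)
    (h : Lp E (ENNReal.ofReal p) ν) :
    (∫⁻ a, (c * ‖h a‖ₑ ^ 2) ^ (p / 2) ∂ν) ^ (p / 2)⁻¹ = c * ‖h‖ₑ ^ 2 := by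
  have hr : 0 < p / 2 := by linarith
  have hsq : ∀ x : ℝ≥0∞, (x ^ 2) ^ (p / 2) = x ^ p := fun x ↦ by
    rw [← ENNReal.rpow_natCast, ← ENNReal.rpow_mul, Nat.cast_ofNat, mul_div_cancel₀ p two_ne_zero]
  simp_rw [ENNReal.mul_rpow_of_nonneg _ _ hr.le, hsq]
  rw [lintegral_const_mul' _ _ (ENNReal.rpow_ne_top_of_nonneg hr.le hc),
    lintegral_rpow_enorm_eq_enorm_rpow hp, ← hsq, ← ENNReal.mul_rpow_of_nonneg _ _ hr.le,
    ENNReal.rpow_rpow_inv hr.ne']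

variable [Fact (1 ≤ ENNReal.ofReal p)]

theorem ball_carlen_lieb_enorm (hp : 1 < p) (hp2 : p ≤ 2) (f g : Lp ℝ (ENNReal.ofReal p) ν) :
    ‖(2 : ℝ)⁻¹ • (f + g)‖ₑ ^ 2 + ENNReal.ofReal (p - 1) * ‖(2 : ℝ)⁻¹ • (f - g)‖ₑ ^ 2
      ≤ (‖f‖ₑ ^ 2 + ‖g‖ₑ ^ 2) / 2 := by
  set u := (2 : ℝ)⁻¹ • (f + g)
  set v := (2 : ℝ)⁻¹ • (f - g)
  have hp0 : 0 < p := by linarith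
  have hpt : ∀ᵐ a ∂ν, (‖u a‖ₑ ^ 2 + ENNReal.ofReal (p - 1) * ‖v a‖ₑ ^ 2) ^ (p / 2)
      ≤ (‖f a‖ₑ ^ p + ‖g a‖ₑ ^ p) / 2 := by
    filter_upwards [coeFn_smul (2 : ℝ)⁻¹ (f + g), coeFn_add f g, coeFn_smul (2 : ℝ)⁻¹ (f - g),
      coeFn_sub f g] with a hu hfg hv hfg'
    have hf : u a + v a = f a := by
      rw [hu, hv, Pi.smul_apply, Pi.smul_apply, hfg, hfg', Pi.add_apply, Pi.sub_apply]; ring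
    have hg : u a - v a = g a := by
      rw [hu, hv, Pi.smul_apply, Pi.smul_apply, hfg, hfg', Pi.add_apply, Pi.sub_apply]; ring
    simpa only [hf, hg] using Real.enorm_sq_add_mul_enorm_sq_rpow_le hp hp2 (u a) (v a)
  calc ‖u‖ₑ ^ 2 + ENNReal.ofReal (p - 1) * ‖v‖ₑ ^ 2
      = (∫⁻ a, (‖u a‖ₑ ^ 2) ^ (p / 2) ∂ν) ^ (p / 2)⁻¹
        + (∫⁻ a, (ENNReal.ofReal (p - 1) * ‖v a‖ₑ ^ 2) ^ (p / 2) ∂ν) ^ (p / 2)⁻¹ := by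
        have hu := lintegral_mul_enorm_sq_rpow_half hp0 ENNReal.one_ne_top u
        simp only [one_mul] at hu
        rw [hu, lintegral_mul_enorm_sq_rpow_half hp0 ENNReal.ofReal_ne_top]
    _ ≤ (∫⁻ a, (‖u a‖ₑ ^ 2 + ENNReal.ofReal (p - 1) * ‖v a‖ₑ ^ 2) ^ (p / 2) ∂ν) ^ (p / 2)⁻¹ :=
        ENNReal.lintegral_Lp_add_lintegral_Lp_le ν (by linarith) (by linarith) _ _
    _ ≤ (∫⁻ a, (‖f a‖ₑ ^ p + ‖g a‖ₑ ^ p) / 2 ∂ν) ^ (p / 2)⁻¹ := by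
        gcongr ?_ ^ _
        exact lintegral_mono_ae hpt
    _ = ((‖f‖ₑ ^ p + ‖g‖ₑ ^ p) / 2) ^ (2 / p) := by
        simp_rw [ENNReal.div_eq_inv_mul]
        rw [lintegral_const_mul' _ _ (by simp),
          lintegral_add_left' ((Lp.aestronglyMeasurable f).enorm.pow_const p),
          lintegral_rpow_enorm_eq_enorm_rpow hp0, lintegral_rpow_enorm_eq_enorm_rpow hp0, inv_div]
    _ ≤ (‖f‖ₑ ^ 2 + ‖g‖ₑ ^ 2) / 2 := by
        simpa only [ENNReal.rpow_two] using ENNReal.rpow_add_rpow_div_two_rpow_le hp0 hp2 ‖f‖ₑ ‖g‖ₑ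

theorem ball_carlen_lieb (hp : 1 < p) (hp2 : p ≤ 2) (f g : Lp ℝ (ENNReal.ofReal p) ν) :
    ‖(2 : ℝ)⁻¹ • (f + g)‖ ^ 2 + (p - 1) * ‖(2 : ℝ)⁻¹ • (f - g)‖ ^ 2 ≤ (‖f‖ ^ 2 + ‖g‖ ^ 2) / 2 := by
  have h := ball_carlen_lieb_enorm hp hp2 f g
  rw [← ENNReal.ofReal_le_ofReal_iff (by positivity),
    ENNReal.ofReal_add (by positivity) (mul_nonneg (by linarith) (by positivity)),
    ENNReal.ofReal_mul (by linarith), ENNReal.ofReal_div_of_pos two_pos,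
    ENNReal.ofReal_add (by positivity) (by positivity)]
  simpa only [ENNReal.ofReal_pow (norm_nonneg _), ofReal_norm, ENNReal.ofReal_ofNat] using h

end MeasureTheory.Lp

lemma le_one_sub_half_of_sq_le_one_sub {x s : ℝ} (hx : 0 ≤ x) (h : x ^ 2 ≤ 1 - s) :
    x ≤ 1 - s / 2 := by
  nlinarith [sq_nonneg s]

/-- For `p ∈ (1,2]`, the space `L^p` is `2`-uniformly convex with constant `(p-1)/8`. -/
theorem lp_two_uniformly_convex
    {Ω : Type*} [MeasurableSpace Ω] (ν : Measure Ω)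
    (p : ℝ) (hp : 1 < p) (hp2 : p ≤ 2) [Fact (1 ≤ ENNReal.ofReal p)] :
    ∀ ε ∈ Set.Icc (0 : ℝ) 2, ∀ f g : Lp ℝ (ENNReal.ofReal p) ν,
      ‖f‖ = 1 → ‖g‖ = 1 → ε ≤ ‖f - g‖ →
      (p - 1) / 8 * ε ^ 2 ≤ 1 - ‖(2 : ℝ)⁻¹ • (f + g)‖ := by
  rintro ε ⟨hε, -⟩ f g hf hg hεfg
  have hbcl := Lp.ball_carlen_lieb hp hp2 f g
  rw [hf, hg, norm_smul (2 : ℝ)⁻¹ (f - g), norm_inv, Real.norm_two] at hbcl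
  have hmid : ‖(2 : ℝ)⁻¹ • (f + g)‖ ^ 2 ≤ 1 - (p - 1) / 4 * ε ^ 2 := by
    have : ε ^ 2 ≤ ‖f - g‖ ^ 2 := pow_le_pow_left₀ hε hεfg 2
    nlinarith
  linarith [le_one_sub_half_of_sq_le_one_sub (norm_nonneg _) hmid]
end
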